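/- Let ≿ be the α-maxmin expected utility preference on 𝓕 represented by f ↦ α min_{p∈P₁} ∫ u(f) dp + (1−α) max_{p∈P₂} ∫ u(f) dp, where u : X → ℝ is nonconstant affine with 0 in the interior of u(X), P₁, P₂ ⊆ Δ are nonempty, convex and weak*-compact, and α ∈ [0,1]. Then its maximal family of prior sets satisfies 𝒬* = {Q ⊆ Δ : Q nonempty, convex and weak*-compact, and (1−α)P₂ ⊆ Q − αP₁}, where Q − αP₁ and (1−α)P₂ denote Minkowski operations. -/

import Mathlib

open scoped Pointwise
open MeasureTheory

namespace Paper

variable {S V : Type*}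

/-- An algebra of subsets of `S` (the events `Σ`). -/
structure IsSetAlg (𝓐 : Set (Set S)) : Prop where
  empty_mem : ∅ ∈ 𝓐
  compl_mem : ∀ A ∈ 𝓐, Aᶜ ∈ 𝓐
  union_mem : ∀ A ∈ 𝓐, ∀ B ∈ 𝓐, A ∪ B ∈ 𝓐

/-- `B₀(Σ)`: real-valued `Σ`-measurable simple functions. -/
def IsSimpleFn (𝓐 : Set (Set S)) (φ : S → ℝ) : Prop :=
  (Set.range φ).Finite ∧ ∀ t : ℝ, φ ⁻¹' {t} ∈ 𝓐

open Classical in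
/-- The integral of a simple function with respect to a finitely additive set function. -/
noncomputable def fint (p : Set S → ℝ) (φ : S → ℝ) : ℝ :=
  if h : (Set.range φ).Finite then ∑ t ∈ h.toFinset, t * p (φ ⁻¹' {t}) else 0

/-- `Δ`: the finitely additive probabilities on `Σ` (canonically extended by `0` off `Σ`). -/
def Δset (𝓐 : Set (Set S)) : Set (Set S → ℝ) :=
  {p | p Set.univ = 1 ∧ (∀ A ∈ 𝓐, 0 ≤ p A) ∧
    (∀ A ∈ 𝓐, ∀ B ∈ 𝓐, Disjoint A B → p (A ∪ B) = p A + p B) ∧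
    ∀ A : Set S, A ∉ 𝓐 → p A = 0}

/-- The weak* topology `σ(Δ, B₀(Σ))`, i.e. the topology induced by the evaluation maps
`p ↦ ∫ φ dp`, `φ ∈ B₀(Σ)`. -/
noncomputable def weakStar (𝓐 : Set (Set S)) : TopologicalSpace (Set S → ℝ) :=
  TopologicalSpace.induced
    (fun p => fun φ : {φ : S → ℝ // IsSimpleFn 𝓐 φ} => fint p φ.1)
    Pi.topologicalSpace

/-- `𝒞`: the weak*-lower semicontinuous convex functions `c : Δ → (-∞, ∞]`. -/
def Cscr (𝓐 : Set (Set S)) : Set ((Set S → ℝ) → EReal) :=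
  {c | (∀ p ∈ Δset 𝓐, ⊥ < c p) ∧
    (@LowerSemicontinuousOn (Set S → ℝ) EReal (weakStar 𝓐) _ c (Δset 𝓐)) ∧
    ∀ p ∈ Δset 𝓐, ∀ q ∈ Δset 𝓐, ∀ a b : ℝ, 0 ≤ a → 0 ≤ b → a + b = 1 →
      c (a • p + b • q) ≤ (a : EReal) * c p + (b : EReal) * c q}

/-- A subset `C ⊆ 𝒞` is grounded if `sup_{c ∈ C} min_{p ∈ Δ} c p = 0`. -/
def Grounded (𝓐 : Set (Set S)) (C : Set ((Set S → ℝ) → EReal)) : Prop :=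
  (⨆ c ∈ C, ⨅ p ∈ Δset 𝓐, c p) = 0

/-- `min_{p ∈ Δ} (∫ φ dp + c p)`. -/
noncomputable def minVal (𝓐 : Set (Set S)) (c : (Set S → ℝ) → EReal) (φ : S → ℝ) : EReal :=
  ⨅ p ∈ Δset 𝓐, ((fint p φ : EReal) + c p)

/-- `max_{q ∈ Δ} (∫ φ dq - b q)`. -/
noncomputable def maxVal (𝓐 : Set (Set S)) (b : (Set S → ℝ) → EReal) (φ : S → ℝ) : EReal :=
  ⨆ q ∈ Δset 𝓐, ((fint q φ : EReal) - b q)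

/-- `max_{c ∈ C} min_{p ∈ Δ} (∫ φ dp + c p)`. -/
noncomputable def maxminVal (𝓐 : Set (Set S)) (C : Set ((Set S → ℝ) → EReal))
    (φ : S → ℝ) : EReal :=
  ⨆ c ∈ C, minVal 𝓐 c φ

/-- `min_{b ∈ B} max_{q ∈ Δ} (∫ φ dq - b q)`. -/
noncomputable def minmaxVal (𝓐 : Set (Set S)) (B : Set ((Set S → ℝ) → EReal))
    (φ : S → ℝ) : EReal :=
  ⨅ b ∈ B, maxVal 𝓐 b φ

/-- `min_{p ∈ P} ∫ φ dp`. -/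
noncomputable def minPVal (P : Set (Set S → ℝ)) (φ : S → ℝ) : EReal :=
  ⨅ p ∈ P, (fint p φ : EReal)

/-- `max_{q ∈ Q} ∫ φ dq`. -/
noncomputable def maxQVal (Q : Set (Set S → ℝ)) (φ : S → ℝ) : EReal :=
  ⨆ q ∈ Q, (fint q φ : EReal)

/-- `max_{P ∈ Pfam} min_{p ∈ P} ∫ φ dp`. -/
noncomputable def maxminPVal (Pfam : Set (Set (Set S → ℝ))) (φ : S → ℝ) : EReal :=
  ⨆ P ∈ Pfam, minPVal P φ

/-- `min_{Q ∈ Qfam} max_{q ∈ Q} ∫ φ dq`. -/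
noncomputable def minmaxQVal (Qfam : Set (Set (Set S → ℝ))) (φ : S → ℝ) : EReal :=
  ⨅ Q ∈ Qfam, maxQVal Q φ

open Classical in
/-- The convex-analytic indicator `δ_P` of a set `P`. -/
noncomputable def ind (P : Set (Set S → ℝ)) : (Set S → ℝ) → EReal :=
  fun p => if p ∈ P then (0 : EReal) else ⊤

variable [AddCommGroup V] [Module ℝ V]

/-- `𝓕`: the simple acts, i.e. `Σ`-measurable maps `f : S → X` with finitely many values. -/
def Acts (𝓐 : Set (Set S)) (X : Set V) : Set (S → V) :=
  {f | (∀ s, f s ∈ X) ∧ (Set.range f).Finite ∧ ∀ v : V, f ⁻¹' {v} ∈ 𝓐}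

/-- The constant act with value `x`. -/
def constAct (x : V) : S → V := fun _ : S => x

/-- The mixture `α f + (1 - α) g` of two acts, defined statewise. -/
def mix (α : ℝ) (f g : S → V) : S → V := fun s => α • f s + (1 - α) • g s

/-- The statewise utility `u ∘ f` of an act. -/
def uAct (u : V → ℝ) (f : S → V) : S → ℝ := fun s => u (f s)

/-- `u : X → ℝ` is nonconstant and affine on `X`. -/
def IsNonconstAffine (X : Set V) (u : V → ℝ) : Prop :=
  (∀ x ∈ X, ∀ y ∈ X, ∀ t ∈ Set.Icc (0 : ℝ) 1,
      u (t • x + (1 - t) • y) = t * u x + (1 - t) * u y) ∧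
  ∃ x ∈ X, ∃ y ∈ X, u x ≠ u y

/-- A niveloidal preference: Axioms A1 (weak order), A2 (monotonicity), A3 (Archimedean)
and A4 (weak C-independence). -/
structure NiveloidalPref (𝓐 : Set (Set S)) (X : Set V)
    (R : (S → V) → (S → V) → Prop) : Prop where
  nontrivial : ∃ f ∈ Acts 𝓐 X, ∃ g ∈ Acts 𝓐 X, R f g ∧ ¬ R g f
  complete : ∀ f ∈ Acts 𝓐 X, ∀ g ∈ Acts 𝓐 X, R f g ∨ R g f
  transitive : ∀ f ∈ Acts 𝓐 X, ∀ g ∈ Acts 𝓐 X, ∀ h ∈ Acts 𝓐 X, R f g → R g h → R f h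
  monotone : ∀ f ∈ Acts 𝓐 X, ∀ g ∈ Acts 𝓐 X,
    (∀ s : S, R (constAct (f s)) (constAct (g s))) → R f g
  archimedean : ∀ f ∈ Acts 𝓐 X, ∀ g ∈ Acts 𝓐 X, ∀ h ∈ Acts 𝓐 X,
    (R f g ∧ ¬ R g f) → (R g h ∧ ¬ R h g) →
    ∃ α ∈ Set.Ioo (0 : ℝ) 1, ∃ β ∈ Set.Ioo (0 : ℝ) 1,
      (R (mix α f h) g ∧ ¬ R g (mix α f h)) ∧
      (R g (mix β f h) ∧ ¬ R (mix β f h) g)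
  weakCIndep : ∀ f ∈ Acts 𝓐 X, ∀ g ∈ Acts 𝓐 X, ∀ x ∈ X, ∀ y ∈ X,
    ∀ α ∈ Set.Ioo (0 : ℝ) 1,
    R (mix α f (constAct x)) (mix α g (constAct x)) →
    R (mix α f (constAct y)) (mix α g (constAct y))

/-- An invariant biseparable preference: Axioms A1 (weak order), A2 (monotonicity),
A3 (Archimedean) and A7 (C-independence). -/
structure IBPref (𝓐 : Set (Set S)) (X : Set V)
    (R : (S → V) → (S → V) → Prop) : Prop where
  nontrivial : ∃ f ∈ Acts 𝓐 X, ∃ g ∈ Acts 𝓐 X, R f g ∧ ¬ R g f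
  complete : ∀ f ∈ Acts 𝓐 X, ∀ g ∈ Acts 𝓐 X, R f g ∨ R g f
  transitive : ∀ f ∈ Acts 𝓐 X, ∀ g ∈ Acts 𝓐 X, ∀ h ∈ Acts 𝓐 X, R f g → R g h → R f h
  monotone : ∀ f ∈ Acts 𝓐 X, ∀ g ∈ Acts 𝓐 X,
    (∀ s : S, R (constAct (f s)) (constAct (g s))) → R f g
  archimedean : ∀ f ∈ Acts 𝓐 X, ∀ g ∈ Acts 𝓐 X, ∀ h ∈ Acts 𝓐 X,
    (R f g ∧ ¬ R g f) → (R g h ∧ ¬ R h g) →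
    ∃ α ∈ Set.Ioo (0 : ℝ) 1, ∃ β ∈ Set.Ioo (0 : ℝ) 1,
      (R (mix α f h) g ∧ ¬ R g (mix α f h)) ∧
      (R g (mix β f h) ∧ ¬ R (mix β f h) g)
  cIndep : ∀ f ∈ Acts 𝓐 X, ∀ g ∈ Acts 𝓐 X, ∀ x ∈ X, ∀ α ∈ Set.Ioo (0 : ℝ) 1,
    (R f g ↔ R (mix α f (constAct x)) (mix α g (constAct x)))

/-- Axiom A5 (uncertainty aversion). -/
def UncertaintyAverse (𝓐 : Set (Set S)) (X : Set V)
    (R : (S → V) → (S → V) → Prop) : Prop :=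
  ∀ f ∈ Acts 𝓐 X, ∀ g ∈ Acts 𝓐 X, ∀ α ∈ Set.Ioo (0 : ℝ) 1,
    R f g → R g f → R (mix α f g) f

/-- `xf` assigns to every act a certainty equivalent. -/
def IsCE (𝓐 : Set (Set S)) (X : Set V) (R : (S → V) → (S → V) → Prop)
    (xf : (S → V) → V) : Prop :=
  ∀ f ∈ Acts 𝓐 X, xf f ∈ X ∧ R f (constAct (xf f)) ∧ R (constAct (xf f)) f

/-- `C*`: the maximal candidate set of penalty functions. -/
def CstarOf (𝓐 : Set (Set S)) (X : Set V) (u : V → ℝ) (xf : (S → V) → V) :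
    Set ((Set S → ℝ) → EReal) :=
  {c | c ∈ Cscr 𝓐 ∧ ∀ f ∈ Acts 𝓐 X, minVal 𝓐 c (uAct u f) ≤ (u (xf f) : EReal)}

/-- `B*`: the maximal candidate set of reward functions. -/
def BstarOf (𝓐 : Set (Set S)) (X : Set V) (u : V → ℝ) (xf : (S → V) → V) :
    Set ((Set S → ℝ) → EReal) :=
  {b | b ∈ Cscr 𝓐 ∧ ∀ f ∈ Acts 𝓐 X, (u (xf f) : EReal) ≤ maxVal 𝓐 b (uAct u f)}

/-- `Pfam*`: the maximal family of prior sets (maxmin form). -/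
def PstarOf (𝓐 : Set (Set S)) (X : Set V) (u : V → ℝ) (xf : (S → V) → V) :
    Set (Set (Set S → ℝ)) :=
  {P | P ⊆ Δset 𝓐 ∧ P.Nonempty ∧ Convex ℝ P ∧ (@IsCompact _ (weakStar 𝓐) P) ∧
    ∀ f ∈ Acts 𝓐 X, minPVal P (uAct u f) ≤ (u (xf f) : EReal)}

/-- `Qfam*`: the maximal family of prior sets (minmax form). -/
def QstarOf (𝓐 : Set (Set S)) (X : Set V) (u : V → ℝ) (xf : (S → V) → V) :
    Set (Set (Set S → ℝ)) :=
  {Q | Q ⊆ Δset 𝓐 ∧ Q.Nonempty ∧ Convex ℝ Q ∧ (@IsCompact _ (weakStar 𝓐) Q) ∧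
    ∀ f ∈ Acts 𝓐 X, (u (xf f) : EReal) ≤ maxQVal Q (uAct u f)}

/-- `C` yields the maxmin representation of `R` with utility `u`. -/
def MaxminRep (𝓐 : Set (Set S)) (X : Set V) (R : (S → V) → (S → V) → Prop)
    (u : V → ℝ) (C : Set ((Set S → ℝ) → EReal)) : Prop :=
  ∀ f ∈ Acts 𝓐 X, ∀ g ∈ Acts 𝓐 X,
    (R f g ↔ maxminVal 𝓐 C (uAct u g) ≤ maxminVal 𝓐 C (uAct u f))

/-- All indicated maxima over `C` and minima over `Δ` are attained. -/
def MaxminAttained (𝓐 : Set (Set S)) (X : Set V) (u : V → ℝ)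
    (C : Set ((Set S → ℝ) → EReal)) : Prop :=
  ∀ f ∈ Acts 𝓐 X,
    (∀ c ∈ C, ∃ p ∈ Δset 𝓐,
      minVal 𝓐 c (uAct u f) = (fint p (uAct u f) : EReal) + c p) ∧
    ∃ c ∈ C, maxminVal 𝓐 C (uAct u f) = minVal 𝓐 c (uAct u f)

/-- `B` yields the minmax representation of `R` with utility `u`. -/
def MinmaxRep (𝓐 : Set (Set S)) (X : Set V) (R : (S → V) → (S → V) → Prop)
    (u : V → ℝ) (B : Set ((Set S → ℝ) → EReal)) : Prop :=
  ∀ f ∈ Acts 𝓐 X, ∀ g ∈ Acts 𝓐 X,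
    (R f g ↔ minmaxVal 𝓐 B (uAct u g) ≤ minmaxVal 𝓐 B (uAct u f))

/-- All indicated minima over `B` and maxima over `Δ` are attained. -/
def MinmaxAttained (𝓐 : Set (Set S)) (X : Set V) (u : V → ℝ)
    (B : Set ((Set S → ℝ) → EReal)) : Prop :=
  ∀ f ∈ Acts 𝓐 X,
    (∀ b ∈ B, ∃ q ∈ Δset 𝓐,
      maxVal 𝓐 b (uAct u f) = (fint q (uAct u f) : EReal) - b q) ∧
    ∃ b ∈ B, minmaxVal 𝓐 B (uAct u f) = maxVal 𝓐 b (uAct u f)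

/-- A family of nonempty, convex, weak*-compact subsets of `Δ`. -/
def IsPriorFamily (𝓐 : Set (Set S)) (Pfam : Set (Set (Set S → ℝ))) : Prop :=
  Pfam.Nonempty ∧ ∀ P ∈ Pfam,
    P ⊆ Δset 𝓐 ∧ P.Nonempty ∧ Convex ℝ P ∧ (@IsCompact _ (weakStar 𝓐) P)

/-- `Pfam` yields the maxmin representation of `R` with utility `u`. -/
def PRep (𝓐 : Set (Set S)) (X : Set V) (R : (S → V) → (S → V) → Prop)
    (u : V → ℝ) (Pfam : Set (Set (Set S → ℝ))) : Prop :=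
  ∀ f ∈ Acts 𝓐 X, ∀ g ∈ Acts 𝓐 X,
    (R f g ↔ maxminPVal Pfam (uAct u g) ≤ maxminPVal Pfam (uAct u f))

/-- All indicated maxima over `Pfam` and minima over `P` are attained. -/
def PAttained (𝓐 : Set (Set S)) (X : Set V) (u : V → ℝ)
    (Pfam : Set (Set (Set S → ℝ))) : Prop :=
  ∀ f ∈ Acts 𝓐 X,
    (∀ P ∈ Pfam, ∃ p ∈ P, minPVal P (uAct u f) = (fint p (uAct u f) : EReal)) ∧
    ∃ P ∈ Pfam, maxminPVal Pfam (uAct u f) = minPVal P (uAct u f)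

/-- `Qfam` yields the minmax representation of `R` with utility `u`. -/
def QRep (𝓐 : Set (Set S)) (X : Set V) (R : (S → V) → (S → V) → Prop)
    (u : V → ℝ) (Qfam : Set (Set (Set S → ℝ))) : Prop :=
  ∀ f ∈ Acts 𝓐 X, ∀ g ∈ Acts 𝓐 X,
    (R f g ↔ minmaxQVal Qfam (uAct u g) ≤ minmaxQVal Qfam (uAct u f))

/-- All indicated minima over `Qfam` and maxima over `Q` are attained. -/
def QAttained (𝓐 : Set (Set S)) (X : Set V) (u : V → ℝ)
    (Qfam : Set (Set (Set S → ℝ))) : Prop :=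
  ∀ f ∈ Acts 𝓐 X,
    (∀ Q ∈ Qfam, ∃ q ∈ Q, maxQVal Q (uAct u f) = (fint q (uAct u f) : EReal)) ∧
    ∃ Q ∈ Qfam, minmaxQVal Qfam (uAct u f) = maxQVal Q (uAct u f)

/-- `c₁ ≈_u c₂`: `c₁` and `c₂` induce the same variational functional on `B₀(Σ, u(X))`. -/
def ApproxEq (𝓐 : Set (Set S)) (X : Set V) (u : V → ℝ)
    (c₁ c₂ : (Set S → ℝ) → EReal) : Prop :=
  ∀ φ : S → ℝ, IsSimpleFn 𝓐 φ → (∀ s, φ s ∈ u '' X) →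
    minVal 𝓐 c₁ φ = minVal 𝓐 c₂ φ

/-- `R₁` is more ambiguity averse than `R₂`. -/
def MoreAmbiguityAverse (𝓐 : Set (Set S)) (X : Set V)
    (R₁ R₂ : (S → V) → (S → V) → Prop) : Prop :=
  ∀ f ∈ Acts 𝓐 X, ∀ x ∈ X, R₂ (constAct x) f → R₁ (constAct x) f

/-- `u₁` and `u₂` are positive affine transformations of each other on `X`. -/
def CardEquiv (X : Set V) (u₁ u₂ : V → ℝ) : Prop :=
  ∃ a b : ℝ, 0 < a ∧ ∀ x ∈ X, u₂ x = a * u₁ x + b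

/-- A capacity on `(S, Σ)`. -/
def IsCapacity (𝓐 : Set (Set S)) (π : Set S → ℝ) : Prop :=
  π ∅ = 0 ∧ π Set.univ = 1 ∧ ∀ A ∈ 𝓐, ∀ B ∈ 𝓐, A ⊆ B → π A ≤ π B

/-- The Choquet integral of a (simple) function against a capacity. -/
noncomputable def choquet (π : Set S → ℝ) (φ : S → ℝ) : ℝ :=
  (∫ t in Set.Ioi (0 : ℝ), π {s | t ≤ φ s}) +
    ∫ t in Set.Iio (0 : ℝ), (π {s | t ≤ φ s} - 1)

/-!
The certainty equivalent satisfies `u(x_f) = α min_{P₁} ∫ u(f) + (1 - α) max_{P₂} ∫ u(f)`, so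
`Q ∈ 𝒬*` says `α min_{P₁} ∫ φ + (1 - α) max_{P₂} ∫ φ ≤ max_Q ∫ φ` for `φ = u ∘ f`. Both sides are
positively homogeneous and `0 ∈ int u(X)`, so this holds for every `φ ∈ B₀(Σ)`. The optima are
attained on the compact sets, so the inequality says: for every `p₂ ∈ P₂` and every `φ`, some
`q - α p₁ ∈ Q - α P₁` satisfies `∫ φ d((1 - α) p₂) ≤ ∫ φ d(q - α p₁)`. The set `Q - α P₁` is convex
and weak*-compact, and the weak*-continuous linear functionals are integrals of simple functions,
so by Hahn–Banach this is equivalent to `(1 - α) p₂ ∈ Q - α P₁`.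
-/

section SimpleIntegral

variable {Y : Type*} {𝓐 : Set (Set S)}

theorem IsSetAlg.univ_mem (hA : IsSetAlg 𝓐) : Set.univ ∈ 𝓐 := by
  simpa using hA.compl_mem ∅ hA.empty_mem

theorem IsSetAlg.inter_mem (hA : IsSetAlg 𝓐) {A B : Set S} (hAm : A ∈ 𝓐) (hBm : B ∈ 𝓐) :
    A ∩ B ∈ 𝓐 := by
  simpa [Set.compl_union] using
    hA.compl_mem _ (hA.union_mem _ (hA.compl_mem _ hAm) _ (hA.compl_mem _ hBm))

theorem IsSetAlg.biUnion_mem (hA : IsSetAlg 𝓐) {ι : Type*} (F : Finset ι) {A : ι → Set S}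
    (h : ∀ i ∈ F, A i ∈ 𝓐) : (⋃ i ∈ F, A i) ∈ 𝓐 := by
  classical
  induction F using Finset.induction_on with
  | empty => simpa using hA.empty_mem
  | insert a F _ ih =>
    rw [Finset.set_biUnion_insert]
    exact hA.union_mem _ (h a (by simp)) _ (ih fun i hi => h i (by simp [hi]))

theorem Δset.apply_empty (hA : IsSetAlg 𝓐) {p : Set S → ℝ} (hp : p ∈ Δset 𝓐) : p ∅ = 0 := by
  simpa using hp.2.2.1 ∅ hA.empty_mem ∅ hA.empty_mem (by simp)

theorem Δset.apply_biUnion (hA : IsSetAlg 𝓐) {p : Set S → ℝ} (hp : p ∈ Δset 𝓐) {ι : Type*}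
    (F : Finset ι) {A : ι → Set S} (hAm : ∀ i ∈ F, A i ∈ 𝓐)
    (hdisj : (F : Set ι).PairwiseDisjoint A) :
    p (⋃ i ∈ F, A i) = ∑ i ∈ F, p (A i) := by
  classical
  induction F using Finset.induction_on with
  | empty => simpa using Δset.apply_empty hA hp
  | insert a F ha ih =>
    rw [Finset.coe_insert, Set.pairwiseDisjoint_insert] at hdisj
    have hd : Disjoint (A a) (⋃ i ∈ F, A i) := Set.disjoint_iUnion₂_right.2 fun i hi =>
      hdisj.2 i hi (ne_of_mem_of_not_mem hi ha).symm
    rw [Finset.set_biUnion_insert, Finset.sum_insert ha,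
      hp.2.2.1 _ (hAm a (by simp)) _ (hA.biUnion_mem F fun i hi => hAm i (by simp [hi])) hd,
      ih (fun i hi => hAm i (by simp [hi])) hdisj.1]

/-- `IsSimpleFn 𝓐` and the second half of `Acts 𝓐 X` unfold to this predicate. -/
def IsSimpleMap (𝓐 : Set (Set S)) (π : S → Y) : Prop :=
  (Set.range π).Finite ∧ ∀ y, π ⁻¹' {y} ∈ 𝓐

theorem IsSimpleMap.preimage_mem (hA : IsSetAlg 𝓐) {π : S → Y} (hπ : IsSimpleMap 𝓐 π)
    (B : Set Y) : π ⁻¹' B ∈ 𝓐 := by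
  classical
  have : π ⁻¹' B = ⋃ y ∈ hπ.1.toFinset.filter (· ∈ B), π ⁻¹' {y} := by ext s; simp
  rw [this]
  exact hA.biUnion_mem _ fun y _ => hπ.2 y

theorem IsSimpleMap.comp (hA : IsSetAlg 𝓐) {Z : Type*} {π : S → Y} (hπ : IsSimpleMap 𝓐 π)
    (g : Y → Z) : IsSimpleMap 𝓐 (g ∘ π) :=
  ⟨Set.range_comp g π ▸ hπ.1.image g, fun z => hπ.preimage_mem hA (g ⁻¹' {z})⟩

theorem IsSimpleMap.prodMk (hA : IsSetAlg 𝓐) {Z : Type*} {π : S → Y} {ρ : S → Z}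
    (hπ : IsSimpleMap 𝓐 π) (hρ : IsSimpleMap 𝓐 ρ) : IsSimpleMap 𝓐 (fun s => (π s, ρ s)) :=
  ⟨(hπ.1.prod hρ.1).subset (by rintro _ ⟨s, rfl⟩; exact ⟨⟨s, rfl⟩, ⟨s, rfl⟩⟩),
    fun y => by
      rw [← Set.singleton_prod_singleton, Set.mk_preimage_prod]
      exact hA.inter_mem (hπ.2 y.1) (hρ.2 y.2)⟩

theorem isSimpleMap_const (hA : IsSetAlg 𝓐) (y : Y) : IsSimpleMap 𝓐 (fun _ : S => y) := by
  classical
  refine ⟨Set.finite_range_const, fun z => ?_⟩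
  rw [Set.preimage_const]
  split_ifs
  exacts [hA.univ_mem, hA.empty_mem]

theorem IsSimpleFn.add (hA : IsSetAlg 𝓐) {φ ψ : S → ℝ} (hφ : IsSimpleFn 𝓐 φ)
    (hψ : IsSimpleFn 𝓐 ψ) : IsSimpleFn 𝓐 (φ + ψ) :=
  (IsSimpleMap.prodMk hA hφ hψ).comp hA fun y => y.1 + y.2

theorem IsSimpleFn.smul (hA : IsSetAlg 𝓐) {φ : S → ℝ} (hφ : IsSimpleFn 𝓐 φ) (c : ℝ) :
    IsSimpleFn 𝓐 (c • φ) :=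
  IsSimpleMap.comp hA hφ (c * ·)

theorem IsSimpleFn.finset_sum (hA : IsSetAlg 𝓐) {ι : Type*} (F : Finset ι) {φ : ι → S → ℝ}
    (hφ : ∀ i ∈ F, IsSimpleFn 𝓐 (φ i)) : IsSimpleFn 𝓐 (∑ i ∈ F, φ i) := by
  classical
  induction F using Finset.induction_on with
  | empty => exact isSimpleMap_const hA (0 : ℝ)
  | insert a F ha ih =>
    rw [Finset.sum_insert ha]
    exact (hφ a (by simp)).add hA (ih fun i hi => hφ i (by simp [hi]))

theorem isSimpleFn_indicator (hA : IsSetAlg 𝓐) {A : Set S} (hAm : A ∈ 𝓐) :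
    IsSimpleFn 𝓐 (A.indicator 1) := by
  refine ⟨((Set.finite_singleton 0).insert 1).subset ?_, fun t => ?_⟩
  · rintro _ ⟨s, rfl⟩
    by_cases h : s ∈ A <;> simp [h]
  · rcases Set.indicator_one_preimage A {t} with h | h | h | h <;> rw [h]
    exacts [hA.univ_mem, hAm, hA.compl_mem A hAm, hA.empty_mem]

theorem fint_add_measure (p q : Set S → ℝ) (φ : S → ℝ) :
    fint (p + q) φ = fint p φ + fint q φ := by
  unfold fint
  split_ifs <;> simp [mul_add, Finset.sum_add_distrib]

theorem fint_smul_measure (c : ℝ) (p : Set S → ℝ) (φ : S → ℝ) :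
    fint (c • p) φ = c * fint p φ := by
  unfold fint
  split_ifs <;> simp [Finset.mul_sum, mul_left_comm]

noncomputable def fintLinear (φ : S → ℝ) : (Set S → ℝ) →ₗ[ℝ] ℝ where
  toFun p := fint p φ
  map_add' p q := fint_add_measure p q φ
  map_smul' c p := fint_smul_measure c p φ

theorem fint_sub_measure (p q : Set S → ℝ) (φ : S → ℝ) :
    fint (p - q) φ = fint p φ - fint q φ :=
  (fintLinear φ).map_sub p q

theorem fint_eq_sum_of_range_subset (hA : IsSetAlg 𝓐) {p : Set S → ℝ} (hp : p ∈ Δset 𝓐)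
    {φ : S → ℝ} (hφ : (Set.range φ).Finite) {T : Finset ℝ} (hT : Set.range φ ⊆ T) :
    fint p φ = ∑ t ∈ T, t * p (φ ⁻¹' {t}) := by
  rw [fint, dif_pos hφ]
  refine Finset.sum_subset (hφ.toFinset_subset.2 hT) fun t _ ht => ?_
  rw [Set.preimage_singleton_eq_empty.2 (by simpa using ht), Δset.apply_empty hA hp, mul_zero]

theorem fint_eq_sum_of_eq_comp (hA : IsSetAlg 𝓐) {p : Set S → ℝ} (hp : p ∈ Δset 𝓐)
    {π : S → Y} (hπ : IsSimpleMap 𝓐 π) (φ : S → ℝ) (g : Y → ℝ) (hφ : φ = g ∘ π)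
    {T : Finset Y} (hT : Set.range π ⊆ T) :
    fint p φ = ∑ y ∈ T, g y * p (π ⁻¹' {y}) := by
  classical
  subst hφ
  have hfiber : ∀ t : ℝ, (g ∘ π) ⁻¹' {t} = ⋃ y ∈ T.filter (g · = t), π ⁻¹' {y} := by
    intro t
    ext s
    simpa using fun _ => hT ⟨s, rfl⟩
  rw [fint_eq_sum_of_range_subset hA hp (hπ.comp hA g).1 (T := T.image g)
      (by rw [Set.range_comp, Finset.coe_image]; exact Set.image_mono hT),
    ← Finset.sum_fiberwise_of_maps_to fun y hy => Finset.mem_image_of_mem g hy]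
  refine Finset.sum_congr rfl fun t _ => ?_
  rw [hfiber, Δset.apply_biUnion hA hp _ (fun y _ => hπ.2 y)
      ((Set.pairwiseDisjoint_fiber π _).subset (Set.subset_univ _)), Finset.mul_sum]
  exact Finset.sum_congr rfl fun y hy => by rw [(Finset.mem_filter.1 hy).2]

theorem fint_const (hA : IsSetAlg 𝓐) {p : Set S → ℝ} (hp : p ∈ Δset 𝓐) (c : ℝ) :
    fint p (fun _ => c) = c := by
  rw [fint_eq_sum_of_range_subset hA hp Set.finite_range_const (T := {c}) (by simp)]
  simp [hp.1]

theorem fint_add (hA : IsSetAlg 𝓐) {p : Set S → ℝ} (hp : p ∈ Δset 𝓐) {φ ψ : S → ℝ}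
    (hφ : IsSimpleFn 𝓐 φ) (hψ : IsSimpleFn 𝓐 ψ) : fint p (φ + ψ) = fint p φ + fint p ψ := by
  have hπ := IsSimpleMap.prodMk hA hφ hψ
  have hT := hπ.1.coe_toFinset.symm.subset
  rw [fint_eq_sum_of_eq_comp hA hp hπ (φ + ψ) (fun y => y.1 + y.2) rfl hT,
    fint_eq_sum_of_eq_comp hA hp hπ φ Prod.fst rfl hT,
    fint_eq_sum_of_eq_comp hA hp hπ ψ Prod.snd rfl hT, ← Finset.sum_add_distrib]
  simp only [add_mul]

theorem fint_smul (hA : IsSetAlg 𝓐) {p : Set S → ℝ} (hp : p ∈ Δset 𝓐) {φ : S → ℝ}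
    (hφ : IsSimpleFn 𝓐 φ) (c : ℝ) : fint p (c • φ) = c * fint p φ := by
  have hT := hφ.1.coe_toFinset.symm.subset
  rw [fint_eq_sum_of_eq_comp hA hp hφ (c • φ) (c * ·) rfl hT,
    fint_eq_sum_of_eq_comp hA hp hφ φ id rfl hT, Finset.mul_sum]
  simp only [id, mul_assoc]

theorem fint_finset_sum (hA : IsSetAlg 𝓐) {p : Set S → ℝ} (hp : p ∈ Δset 𝓐) {ι : Type*}
    (F : Finset ι) {φ : ι → S → ℝ} (hφ : ∀ i ∈ F, IsSimpleFn 𝓐 (φ i)) :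
    fint p (∑ i ∈ F, φ i) = ∑ i ∈ F, fint p (φ i) := by
  classical
  induction F using Finset.induction_on with
  | empty =>
    rw [Finset.sum_empty, Finset.sum_empty]
    exact fint_const hA hp 0
  | insert a F ha ih =>
    rw [Finset.sum_insert ha, Finset.sum_insert ha,
      fint_add hA hp (hφ a (by simp)) (IsSimpleFn.finset_sum hA F fun i hi => hφ i (by simp [hi])),
      ih fun i hi => hφ i (by simp [hi])]

theorem fint_indicator (hA : IsSetAlg 𝓐) {p : Set S → ℝ} (hp : p ∈ Δset 𝓐) {A : Set S}
    (hAm : A ∈ 𝓐) : fint p (A.indicator 1) = p A := by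
  classical
  rw [fint_eq_sum_of_range_subset hA hp (isSimpleFn_indicator hA hAm).1 (T := {0, 1}) ?_]
  · simp only [Finset.sum_pair zero_ne_one, zero_mul, zero_add, one_mul]
    congr 1
    ext s
    by_cases h : s ∈ A <;> simp [h]
  · rintro _ ⟨s, rfl⟩
    by_cases h : s ∈ A <;> simp [h]

end SimpleIntegral

section WeakStar

open Topology

variable {𝓐 : Set (Set S)}

/-- `weakStar 𝓐` is the topology induced by this map. -/
noncomputable def evalSimple (𝓐 : Set (Set S)) :
    (Set S → ℝ) →ₗ[ℝ] ({φ : S → ℝ // IsSimpleFn 𝓐 φ} → ℝ) :=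
  LinearMap.pi fun φ => fintLinear φ.1

theorem continuous_evalSimple : Continuous[weakStar 𝓐, _] (evalSimple 𝓐) :=
  continuous_induced_dom

theorem continuous_fint {φ : S → ℝ} (hφ : IsSimpleFn 𝓐 φ) :
    Continuous[weakStar 𝓐, _] (fun p => fint p φ) :=
  letI := weakStar 𝓐
  (continuous_apply ⟨φ, hφ⟩).comp continuous_evalSimple

theorem exists_fint_eq_apply_evalSimple (hA : IsSetAlg 𝓐)
    (g : StrongDual ℝ ({φ : S → ℝ // IsSimpleFn 𝓐 φ} → ℝ)) :
    ∃ ψ, IsSimpleFn 𝓐 ψ ∧ ∀ p ∈ Submodule.span ℝ (Δset 𝓐), g (evalSimple 𝓐 p) = fint p ψ := by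
  have hg : g.toLinearMap ∈ Submodule.span ℝ (Set.range fun φ =>
      LinearMap.proj (R := ℝ) (φ := fun _ : {φ : S → ℝ // IsSimpleFn 𝓐 φ} => ℝ) φ) :=
    (LinearMap.mem_span_iff_continuous _).2 g.continuous
  obtain ⟨c, hc⟩ := Finsupp.mem_span_range_iff_exists_finsupp.1 hg
  refine ⟨∑ φ ∈ c.support, c φ • φ.1,
    IsSimpleFn.finset_sum hA _ fun φ _ => φ.2.smul hA _, fun p hp => ?_⟩
  refine LinearMap.eqOn_span' (f := g.toLinearMap ∘ₗ evalSimple 𝓐) (g := fintLinear _)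
    (fun p hp => ?_) hp
  change g.toLinearMap (evalSimple 𝓐 p) = fint p _
  rw [← hc, fint_finset_sum hA hp _ fun φ _ => φ.2.smul hA _, Finsupp.sum]
  simp only [evalSimple, fintLinear, LinearMap.coe_sum, LinearMap.coe_smul, LinearMap.coe_proj,
    Finset.sum_apply, Pi.smul_apply, Function.eval, LinearMap.pi_apply, LinearMap.coe_mk,
    AddHom.coe_mk, smul_eq_mul]
  exact Finset.sum_congr rfl fun φ _ => (fint_smul hA hp φ.2 _).symm

theorem evalSimple_injOn (hA : IsSetAlg 𝓐) :
    Set.InjOn (evalSimple 𝓐) (Submodule.span ℝ (Δset 𝓐)) := by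
  intro p hp q hq hpq
  funext A
  by_cases hAm : A ∈ 𝓐
  · have key : ∀ r ∈ Submodule.span ℝ (Δset 𝓐), fint r (A.indicator 1) = r A :=
      fun r hr => LinearMap.eqOn_span' (f := fintLinear (A.indicator 1)) (g := LinearMap.proj A)
        (fun p hp => fint_indicator hA hp hAm) hr
    rw [← key p hp, ← key q hq]
    exact congrFun hpq ⟨_, isSimpleFn_indicator hA hAm⟩
  · have key : ∀ r ∈ Submodule.span ℝ (Δset 𝓐), r A = 0 :=
      fun r hr => LinearMap.eqOn_span' (f := LinearMap.proj A) (g := 0)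
        (fun p hp => hp.2.2.2 A hAm) hr
    rw [key p hp, key q hq]

theorem mem_iff_forall_exists_fint_le (hA : IsSetAlg 𝓐) {K : Set (Set S → ℝ)}
    (hKΔ : K ⊆ Submodule.span ℝ (Δset 𝓐)) (hKc : Convex ℝ K) (hKk : @IsCompact _ (weakStar 𝓐) K)
    {z : Set S → ℝ} (hz : z ∈ Submodule.span ℝ (Δset 𝓐)) :
    z ∈ K ↔ ∀ φ, IsSimpleFn 𝓐 φ → ∃ k ∈ K, fint z φ ≤ fint k φ := by
  refine ⟨fun hzK φ _ => ⟨z, hzK, le_rfl⟩, fun h => ?_⟩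
  by_contra hzK
  have hTz : evalSimple 𝓐 z ∉ evalSimple 𝓐 '' K := fun ⟨k, hk, hkz⟩ =>
    hzK (evalSimple_injOn hA (hKΔ hk) hz hkz ▸ hk)
  obtain ⟨g, c, hgK, hgz⟩ := geometric_hahn_banach_closed_point (hKc.linear_image _)
    (@IsCompact.image _ _ (weakStar 𝓐) _ _ _ hKk continuous_evalSimple).isClosed hTz
  obtain ⟨ψ, hψ, hgψ⟩ := exists_fint_eq_apply_evalSimple hA g
  obtain ⟨k, hk, hzk⟩ := h ψ hψ
  have hk' := hgK _ ⟨k, hk, rfl⟩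
  rw [hgψ k (hKΔ hk)] at hk'
  rw [hgψ z hz] at hgz
  linarith

end WeakStar

section AlphaMaxmin

open Topology

variable {E : Type*} {𝓐 : Set (Set S)}

theorem exists_minPVal_eq {P : Set (Set S → ℝ)} (hPk : @IsCompact _ (weakStar 𝓐) P)
    (hPn : P.Nonempty) {φ : S → ℝ} (hφ : IsSimpleFn 𝓐 φ) :
    ∃ p ∈ P, (∀ p' ∈ P, fint p φ ≤ fint p' φ) ∧ minPVal P φ = fint p φ := by
  let _ := weakStar 𝓐
  obtain ⟨p, hp, hmin⟩ := hPk.exists_isMinOn hPn (continuous_fint hφ).continuousOn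
  exact ⟨p, hp, hmin, le_antisymm (iInf₂_le p hp)
    (le_iInf₂ fun p' hp' => EReal.coe_le_coe (hmin hp'))⟩

theorem exists_maxQVal_eq {Q : Set (Set S → ℝ)} (hQk : @IsCompact _ (weakStar 𝓐) Q)
    (hQn : Q.Nonempty) {φ : S → ℝ} (hφ : IsSimpleFn 𝓐 φ) :
    ∃ q ∈ Q, (∀ q' ∈ Q, fint q' φ ≤ fint q φ) ∧ maxQVal Q φ = fint q φ := by
  let _ := weakStar 𝓐
  obtain ⟨q, hq, hmax⟩ := hQk.exists_isMaxOn hQn (continuous_fint hφ).continuousOn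
  exact ⟨q, hq, hmax, le_antisymm (iSup₂_le fun q' hq' => EReal.coe_le_coe (hmax hq'))
    (le_iSup₂ (f := fun q (_ : q ∈ Q) => (fint q φ : EReal)) q hq)⟩

theorem minPVal_const (hA : IsSetAlg 𝓐) {P : Set (Set S → ℝ)} (hP : P ⊆ Δset 𝓐)
    (hPn : P.Nonempty) (c : ℝ) : minPVal P (fun _ => c) = c :=
  (biInf_congr fun p hp => by rw [fint_const hA (hP hp)]).trans (biInf_const hPn)

theorem maxQVal_const (hA : IsSetAlg 𝓐) {Q : Set (Set S → ℝ)} (hQ : Q ⊆ Δset 𝓐)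
    (hQn : Q.Nonempty) (c : ℝ) : maxQVal Q (fun _ => c) = c :=
  (biSup_congr fun q hq => by rw [fint_const hA (hQ hq)]).trans (biSup_const hQn)

noncomputable def alphaMaxmin (α : ℝ) (P₁ P₂ : Set (Set S → ℝ)) (φ : S → ℝ) : EReal :=
  (α : EReal) * minPVal P₁ φ + ((1 - α : ℝ) : EReal) * maxQVal P₂ φ

theorem alphaMaxmin_const (hA : IsSetAlg 𝓐) {α : ℝ} {P₁ P₂ : Set (Set S → ℝ)}
    (hP₁ : P₁ ⊆ Δset 𝓐) (hP₁n : P₁.Nonempty) (hP₂ : P₂ ⊆ Δset 𝓐) (hP₂n : P₂.Nonempty)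
    (c : ℝ) : alphaMaxmin α P₁ P₂ (fun _ => c) = c := by
  rw [alphaMaxmin, minPVal_const hA hP₁ hP₁n, maxQVal_const hA hP₂ hP₂n]
  exact_mod_cast (by ring : α * c + (1 - α) * c = c)

theorem isSimpleFn_uAct (hA : IsSetAlg 𝓐) {X : Set E} {u : E → ℝ} {f : S → E}
    (hf : f ∈ Acts 𝓐 X) : IsSimpleFn 𝓐 (uAct u f) :=
  IsSimpleMap.comp hA hf.2 u

theorem alphaMaxmin_eq_certaintyEquiv (hA : IsSetAlg 𝓐) {X : Set E}
    {R : (S → E) → (S → E) → Prop} {u : E → ℝ} {α : ℝ} {P₁ P₂ : Set (Set S → ℝ)}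
    (hP₁ : P₁ ⊆ Δset 𝓐) (hP₁n : P₁.Nonempty) (hP₂ : P₂ ⊆ Δset 𝓐) (hP₂n : P₂.Nonempty)
    (hrep : ∀ f ∈ Acts 𝓐 X, ∀ g ∈ Acts 𝓐 X,
      (R f g ↔ alphaMaxmin α P₁ P₂ (uAct u g) ≤ alphaMaxmin α P₁ P₂ (uAct u f)))
    {xf : (S → E) → E} (hxf : IsCE 𝓐 X R xf) {f : S → E} (hf : f ∈ Acts 𝓐 X) :
    alphaMaxmin α P₁ P₂ (uAct u f) = u (xf f) := by
  obtain ⟨hxX, hfx, hxf⟩ := hxf f hf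
  have hx : constAct (xf f) ∈ Acts 𝓐 X := ⟨fun _ => hxX, isSimpleMap_const hA _⟩
  rw [← alphaMaxmin_const hA hP₁ hP₁n hP₂ hP₂n (u (xf f))]
  exact le_antisymm ((hrep _ hx f hf).1 hxf) ((hrep f hf _ hx).1 hfx)

/-- The inequality reads `∫ φ d((1 - α) p₂) ≤ ∫ φ d(q - α p₁)`. -/
def DominatedAt (α : ℝ) (P₁ P₂ Q : Set (Set S → ℝ)) (φ : S → ℝ) : Prop :=
  ∀ p₂ ∈ P₂, ∃ p₁ ∈ P₁, ∃ q ∈ Q, α * fint p₁ φ + (1 - α) * fint p₂ φ ≤ fint q φ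

theorem alphaMaxmin_le_maxQVal_iff {α : ℝ} (hα : α ∈ Set.Icc (0 : ℝ) 1)
    {P₁ P₂ Q : Set (Set S → ℝ)}
    (hP₁k : @IsCompact _ (weakStar 𝓐) P₁) (hP₁n : P₁.Nonempty)
    (hP₂k : @IsCompact _ (weakStar 𝓐) P₂) (hP₂n : P₂.Nonempty)
    (hQk : @IsCompact _ (weakStar 𝓐) Q) (hQn : Q.Nonempty) {φ : S → ℝ} (hφ : IsSimpleFn 𝓐 φ) :
    alphaMaxmin α P₁ P₂ φ ≤ maxQVal Q φ ↔ DominatedAt α P₁ P₂ Q φ := by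
  obtain ⟨p₁, hp₁, hp₁min, e₁⟩ := exists_minPVal_eq hP₁k hP₁n hφ
  obtain ⟨p₂, hp₂, hp₂max, e₂⟩ := exists_maxQVal_eq hP₂k hP₂n hφ
  obtain ⟨q, hq, hqmax, e⟩ := exists_maxQVal_eq hQk hQn hφ
  rw [alphaMaxmin, e₁, e₂, e]
  norm_cast
  constructor
  · intro h p₂' hp₂'
    refine ⟨p₁, hp₁, q, hq, ?_⟩
    linarith [mul_le_mul_of_nonneg_left (hp₂max p₂' hp₂') (sub_nonneg.2 hα.2)]
  · intro h
    obtain ⟨p₁', hp₁', q', hq', hle⟩ := h p₂ hp₂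
    linarith [mul_le_mul_of_nonneg_left (hp₁min p₁' hp₁') hα.1, hqmax q' hq']

theorem DominatedAt.of_smul (hA : IsSetAlg 𝓐) {α : ℝ} {P₁ P₂ Q : Set (Set S → ℝ)}
    (hP₁ : P₁ ⊆ Δset 𝓐) (hP₂ : P₂ ⊆ Δset 𝓐) (hQ : Q ⊆ Δset 𝓐) {φ : S → ℝ}
    (hφ : IsSimpleFn 𝓐 φ) {c : ℝ} (hc : 0 < c) (h : DominatedAt α P₁ P₂ Q (c • φ)) :
    DominatedAt α P₁ P₂ Q φ := by
  intro p₂ hp₂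
  obtain ⟨p₁, hp₁, q, hq, hle⟩ := h p₂ hp₂
  rw [fint_smul hA (hP₁ hp₁) hφ, fint_smul hA (hP₂ hp₂) hφ, fint_smul hA (hQ hq) hφ] at hle
  refine ⟨p₁, hp₁, q, hq, le_of_mul_le_mul_left ?_ hc⟩
  linarith

theorem exists_pos_mul_mem_of_mem_nhds {φ : S → ℝ} (hφ : (Set.range φ).Finite) {T : Set ℝ}
    (hT : T ∈ 𝓝 0) : ∃ c : ℝ, 0 < c ∧ ∀ s, c * φ s ∈ T := by
  have : ∀ᶠ c in 𝓝 (0 : ℝ), ∀ t ∈ Set.range φ, c * t ∈ T :=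
    hφ.eventually_all.2 fun t _ => (continuous_mul_const t).tendsto' 0 0 (zero_mul t) hT
  obtain ⟨c, hc, hpos⟩ :=
    ((this.filter_mono nhdsWithin_le_nhds).and (self_mem_nhdsWithin (s := Set.Ioi 0))).exists
  exact ⟨c, hpos, fun s => hc _ ⟨s, rfl⟩⟩

theorem exists_mem_acts_uAct_eq [Nonempty E] (hA : IsSetAlg 𝓐) {X : Set E} {u : E → ℝ}
    {φ : S → ℝ} (hφ : IsSimpleFn 𝓐 φ) (hφX : ∀ s, φ s ∈ u '' X) : ∃ f ∈ Acts 𝓐 X, uAct u f = φ := by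
  have : ∀ t ∈ u '' X, ∃ x ∈ X, u x = t := fun t ht => ht
  choose! g hgX hgu using this
  exact ⟨g ∘ φ, ⟨fun s => hgX _ (hφX s), IsSimpleMap.comp hA hφ g⟩,
    funext fun s => hgu _ (hφX s)⟩

theorem forall_acts_iff_forall_isSimpleFn (hA : IsSetAlg 𝓐) {X : Set E} {u : E → ℝ}
    (h0 : (0 : ℝ) ∈ interior (u '' X)) {Φ : (S → ℝ) → Prop}
    (hΦ : ∀ φ, IsSimpleFn 𝓐 φ → ∀ c : ℝ, 0 < c → Φ (c • φ) → Φ φ) :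
    (∀ f ∈ Acts 𝓐 X, Φ (uAct u f)) ↔ ∀ φ, IsSimpleFn 𝓐 φ → Φ φ := by
  refine ⟨fun h φ hφ => ?_, fun h f hf => h _ (isSimpleFn_uAct hA hf)⟩
  obtain ⟨x, -, -⟩ := interior_subset h0
  have : Nonempty E := ⟨x⟩
  obtain ⟨c, hc, hcφ⟩ := exists_pos_mul_mem_of_mem_nhds hφ.1 (mem_interior_iff_mem_nhds.1 h0)
  obtain ⟨f, hf, hfφ⟩ := exists_mem_acts_uAct_eq hA (hφ.smul hA c) hcφ
  exact hΦ φ hφ c hc (hfφ ▸ h f hf)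

theorem isCompact_sub_smul {K L : Set (Set S → ℝ)} (hKk : @IsCompact _ (weakStar 𝓐) K)
    (hLk : @IsCompact _ (weakStar 𝓐) L) (α : ℝ) : @IsCompact _ (weakStar 𝓐) (K - α • L) := by
  let _ := weakStar 𝓐
  have : IsTopologicalAddGroup (Set S → ℝ) := topologicalAddGroup_induced (evalSimple 𝓐)
  have : ContinuousSMul ℝ (Set S → ℝ) := continuousSMul_induced (evalSimple 𝓐)
  have hKL : K - α • L = (fun x => x.1 - α • x.2) '' K ×ˢ L := by
    ext; simp [Set.mem_sub, Set.mem_smul_set, and_assoc]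
  rw [hKL]
  exact (hKk.prod hLk).image (continuous_fst.sub (continuous_snd.const_smul α))

theorem forall_dominatedAt_iff_smul_subset_sub (hA : IsSetAlg 𝓐) {α : ℝ}
    {P₁ P₂ Q : Set (Set S → ℝ)} (hQ : Q ⊆ Δset 𝓐) (hQc : Convex ℝ Q)
    (hQk : @IsCompact _ (weakStar 𝓐) Q) (hP₁ : P₁ ⊆ Δset 𝓐) (hP₁c : Convex ℝ P₁)
    (hP₁k : @IsCompact _ (weakStar 𝓐) P₁) (hP₂ : P₂ ⊆ Δset 𝓐) :
    (∀ φ, IsSimpleFn 𝓐 φ → DominatedAt α P₁ P₂ Q φ) ↔ (1 - α) • P₂ ⊆ Q - α • P₁ := by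
  have hspan : Q - α • P₁ ⊆ Submodule.span ℝ (Δset 𝓐) := by
    rintro _ ⟨q, hq, _, ⟨p, hp, rfl⟩, rfl⟩
    exact sub_mem (Submodule.subset_span (hQ hq))
      (Submodule.smul_mem _ _ (Submodule.subset_span (hP₁ hp)))
  rw [Set.smul_set_subset_iff]
  constructor
  · intro h p₂ hp₂
    rw [mem_iff_forall_exists_fint_le hA hspan (hQc.sub (hP₁c.smul α))
      (isCompact_sub_smul hQk hP₁k α) (Submodule.smul_mem _ _ (Submodule.subset_span (hP₂ hp₂)))]
    intro φ hφ
    obtain ⟨p₁, hp₁, q, hq, hle⟩ := h φ hφ p₂ hp₂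
    refine ⟨q - α • p₁, Set.sub_mem_sub hq (Set.smul_mem_smul_set hp₁), ?_⟩
    rw [fint_sub_measure, fint_smul_measure, fint_smul_measure]
    linarith
  · intro h φ _ p₂ hp₂
    obtain ⟨q, hq, _, ⟨p₁, hp₁, rfl⟩, hk⟩ := h hp₂
    have := congrArg (fint · φ) hk
    simp only [fint_sub_measure, fint_smul_measure] at this
    exact ⟨p₁, hp₁, q, hq, by linarith⟩

end AlphaMaxmin

theorem stmt14_general {S V : Type*}
    (𝓐 : Set (Set S)) (hA : IsSetAlg 𝓐)
    (X : Set V)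
    (R : (S → V) → (S → V) → Prop)
    (u : V → ℝ) (h0 : (0 : ℝ) ∈ interior (u '' X))
    (P₁ P₂ : Set (Set S → ℝ))
    (hP₁ : P₁ ⊆ Δset 𝓐) (hP₁n : P₁.Nonempty) (hP₁c : Convex ℝ P₁)
    (hP₁k : @IsCompact _ (weakStar 𝓐) P₁)
    (hP₂ : P₂ ⊆ Δset 𝓐) (hP₂n : P₂.Nonempty)
    (hP₂k : @IsCompact _ (weakStar 𝓐) P₂)
    (α : ℝ) (hα : α ∈ Set.Icc (0 : ℝ) 1)
    (hrep : ∀ f ∈ Acts 𝓐 X, ∀ g ∈ Acts 𝓐 X,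
      (R f g ↔
        (α : EReal) * minPVal P₁ (uAct u g) +
          ((1 - α : ℝ) : EReal) * maxQVal P₂ (uAct u g) ≤
        (α : EReal) * minPVal P₁ (uAct u f) +
          ((1 - α : ℝ) : EReal) * maxQVal P₂ (uAct u f)))
    (xf : (S → V) → V) (hxf : IsCE 𝓐 X R xf) :
    QstarOf 𝓐 X u xf =
      {Q | Q ⊆ Δset 𝓐 ∧ Q.Nonempty ∧ Convex ℝ Q ∧ (@IsCompact _ (weakStar 𝓐) Q) ∧
        (1 - α) • P₂ ⊆ Q - α • P₁} := by
  ext Q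
  refine and_congr_right fun hQ => and_congr_right fun hQn => and_congr_right fun hQc =>
    and_congr_right fun hQk => ?_
  calc (∀ f ∈ Acts 𝓐 X, (u (xf f) : EReal) ≤ maxQVal Q (uAct u f))
      ↔ ∀ f ∈ Acts 𝓐 X, DominatedAt α P₁ P₂ Q (uAct u f) := forall₂_congr fun f hf => by
        rw [← alphaMaxmin_eq_certaintyEquiv hA hP₁ hP₁n hP₂ hP₂n hrep hxf hf]
        exact alphaMaxmin_le_maxQVal_iff hα hP₁k hP₁n hP₂k hP₂n hQk hQn (isSimpleFn_uAct hA hf)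
    _ ↔ ∀ φ, IsSimpleFn 𝓐 φ → DominatedAt α P₁ P₂ Q φ :=
        forall_acts_iff_forall_isSimpleFn hA h0 fun _ hφ _ hc =>
          DominatedAt.of_smul hA hP₁ hP₂ hQ hφ hc
    _ ↔ (1 - α) • P₂ ⊆ Q - α • P₁ :=
        forall_dominatedAt_iff_smul_subset_sub hA hQ hQc hQk hP₁ hP₁c hP₁k hP₂

theorem stmt14 {S V : Type*} [Nonempty S] [AddCommGroup V] [Module ℝ V]
    (𝓐 : Set (Set S)) (hA : IsSetAlg 𝓐)
    (X : Set V) (hX : X.Nonempty) (hXc : Convex ℝ X)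
    (R : (S → V) → (S → V) → Prop) (hpref : IBPref 𝓐 X R)
    (u : V → ℝ) (hu : IsNonconstAffine X u) (h0 : (0 : ℝ) ∈ interior (u '' X))
    (P₁ P₂ : Set (Set S → ℝ))
    (hP₁ : P₁ ⊆ Δset 𝓐) (hP₁n : P₁.Nonempty) (hP₁c : Convex ℝ P₁)
    (hP₁k : @IsCompact _ (weakStar 𝓐) P₁)
    (hP₂ : P₂ ⊆ Δset 𝓐) (hP₂n : P₂.Nonempty) (hP₂c : Convex ℝ P₂)
    (hP₂k : @IsCompact _ (weakStar 𝓐) P₂)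
    (α : ℝ) (hα : α ∈ Set.Icc (0 : ℝ) 1)
    (hrep : ∀ f ∈ Acts 𝓐 X, ∀ g ∈ Acts 𝓐 X,
      (R f g ↔
        (α : EReal) * minPVal P₁ (uAct u g) +
          ((1 - α : ℝ) : EReal) * maxQVal P₂ (uAct u g) ≤
        (α : EReal) * minPVal P₁ (uAct u f) +
          ((1 - α : ℝ) : EReal) * maxQVal P₂ (uAct u f)))
    (xf : (S → V) → V) (hxf : IsCE 𝓐 X R xf) :
    QstarOf 𝓐 X u xf =
      {Q | Q ⊆ Δset 𝓐 ∧ Q.Nonempty ∧ Convex ℝ Q ∧ (@IsCompact _ (weakStar 𝓐) Q) ∧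
        (1 - α) • P₂ ⊆ Q - α • P₁} :=
  stmt14_general 𝓐 hA X R u h0 P₁ P₂ hP₁ hP₁n hP₁c hP₁k hP₂ hP₂n hP₂k α hα hrep xf hxf

end Paper
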